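/- arXiv:2311.18095 — 10 statements merged into one kernel-verified Lean document; each statement's English description precedes it below -/
import Mathlib

section
/- Let A and C be frames, f : A → C a surjective frame homomorphism, and B a non-archimedean base of A. Then the image f '' B is a non-archimedean base of C. (Hence every quotient of a non-archimedean frame is non-archimedean.) -/
section

variable {A C F : Type*}

def IsJoinBase [CompleteLattice A] (B : Set A) : Prop :=
  ∀ a : A, a = sSup {b ∈ B | b ≤ a}

def IsNestedOrDisjoint [Lattice A] [OrderBot A] (B : Set A) : Prop :=
  ∀ b₁ ∈ B, ∀ b₂ ∈ B, b₁ ⊓ b₂ = ⊥ ∨ b₁ ≤ b₂ ∨ b₂ ≤ b₁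

theorem IsJoinBase.image_of_surjective [CompleteLattice A] [CompleteLattice C] [FunLike F A C]
    [sSupHomClass F A C] {B : Set A} (hB : IsJoinBase B) {f : F} (hf : Function.Surjective f) :
    IsJoinBase (f '' B) := by
  intro c
  obtain ⟨a, rfl⟩ := hf c
  refine le_antisymm ?_ (sSup_le fun _ hd => hd.2)
  calc f a = sSup (f '' {b ∈ B | b ≤ a}) := by rw [← map_sSup, ← hB a]
    _ ≤ sSup {d ∈ f '' B | d ≤ f a} :=
      sSup_le_sSup <| by
        rintro _ ⟨b, ⟨hbB, hba⟩, rfl⟩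
        exact ⟨⟨b, hbB, rfl⟩, OrderHomClass.mono f hba⟩

theorem IsNestedOrDisjoint.image [Lattice A] [OrderBot A] [Lattice C] [OrderBot C] [FunLike F A C]
    [InfHomClass F A C] [BotHomClass F A C] {B : Set A} (hB : IsNestedOrDisjoint B) (f : F) :
    IsNestedOrDisjoint (f '' B) := by
  rintro _ ⟨b₁, hb₁, rfl⟩ _ ⟨b₂, hb₂, rfl⟩
  rcases hB b₁ hb₁ b₂ hb₂ with h | h | h
  · exact Or.inl <| by rw [← map_inf, h, map_bot]
  · exact Or.inr <| Or.inl <| OrderHomClass.mono f h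
  · exact Or.inr <| Or.inr <| OrderHomClass.mono f h

end

/-- The image of a non-archimedean base under a surjective frame
homomorphism is a non-archimedean base of the codomain. -/
theorem image_of_nonarchimedean_base_is_nonarchimedean_base
    {A C : Type*} [Order.Frame A] [Order.Frame C]
    (f : FrameHom A C) (hf : Function.Surjective f) (B : Set A)
    (hbase : ∀ a : A, a = sSup {b ∈ B | b ≤ a})
    (htri : ∀ b₁ ∈ B, ∀ b₂ ∈ B, b₁ ⊓ b₂ = ⊥ ∨ b₁ ≤ b₂ ∨ b₂ ≤ b₁) :
    (∀ c : C, c = sSup {d ∈ f '' B | d ≤ c}) ∧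
    (∀ d₁ ∈ f '' B, ∀ d₂ ∈ f '' B, d₁ ⊓ d₂ = ⊥ ∨ d₁ ≤ d₂ ∨ d₂ ≤ d₁) :=
  ⟨IsJoinBase.image_of_surjective hbase hf, IsNestedOrDisjoint.image htri f⟩
end

section
/- Let B be a non-archimedean base of a frame A, let b ∈ B, and let c ∈ A with ⊥ < c ≤ b. If c is complemented, i.e. c ⊔ cᶜ = ⊤, then b is complemented: b ⊔ bᶜ = ⊤. -/
theorem not_le_compl_of_le {A : Type*} [HeytingAlgebra A] {b c : A} (hc : ⊥ < c) (hcb : c ≤ b) :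
    ¬b ≤ cᶜ := fun hbc =>
  hc.ne' ((le_compl_iff_disjoint_right.1 hbc).eq_bot_of_ge hcb)

theorem le_sup_compl_of_not_le {A : Type*} [Order.Frame A] {B : Set A}
    (hbase : ∀ a : A, a = sSup {b ∈ B | b ≤ a})
    (htri : ∀ b₁ ∈ B, ∀ b₂ ∈ B, b₁ ⊓ b₂ = ⊥ ∨ b₁ ≤ b₂ ∨ b₂ ≤ b₁)
    {b : A} (hb : b ∈ B) {x : A} (hbx : ¬b ≤ x) : x ≤ b ⊔ bᶜ := by
  rw [hbase x]
  refine sSup_le fun d ⟨hdB, hdx⟩ => ?_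
  rcases htri d hdB b hb with hdisj | hdb | hbd
  · exact le_sup_of_le_right (le_compl_iff_disjoint_right.2 (disjoint_iff.2 hdisj))
  · exact le_sup_of_le_left hdb
  · exact absurd (hbd.trans hdx) hbx

/-- If `b` is a member of a non-archimedean base and some complemented
`c` with `⊥ < c ≤ b` exists, then `b` is complemented. -/
theorem complemented_of_le_basic
    {A : Type*} [Order.Frame A] (B : Set A)
    (hbase : ∀ a : A, a = sSup {b ∈ B | b ≤ a})
    (htri : ∀ b₁ ∈ B, ∀ b₂ ∈ B, b₁ ⊓ b₂ = ⊥ ∨ b₁ ≤ b₂ ∨ b₂ ≤ b₁)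
    (b : A) (hb : b ∈ B) (c : A) (hc : ⊥ < c) (hcb : c ≤ b)
    (hcomp : c ⊔ cᶜ = ⊤) :
    b ⊔ bᶜ = ⊤ := by
  have hcompl : cᶜ ≤ b ⊔ bᶜ :=
    le_sup_compl_of_not_le hbase htri hb (not_le_compl_of_le hc hcb)
  exact top_le_iff.1 (hcomp ▸ sup_le (le_sup_of_le_left hcb) hcompl)
end

section
/- Let B be a non-archimedean base of a frame A and let a ∈ A with a ≠ ⊥. If m := sInf {b ∈ B | b ≤ a} is not ⊥, then m ≤ a and m is an atom of A, i.e. m ≠ ⊥ and every x < m equals ⊥. (In particular, if the infimum of the local base at a is nonzero, there is an atom below a.) -/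
section CompleteLattice

variable {A : Type*} [CompleteLattice A] {B : Set A}

theorem exists_mem_le_of_ne_bot_of_eq_sSup (hB : ∀ a : A, a = sSup {b ∈ B | b ≤ a}) {x : A}
    (hx : x ≠ ⊥) : ∃ b ∈ B, b ≤ x := by
  by_contra! h
  exact hx <| (hB x).trans <| sSup_eq_bot.2 fun b hb => (h b hb.1 hb.2).elim

theorem sInf_le_of_ne_bot_of_eq_sSup (hB : ∀ a : A, a = sSup {b ∈ B | b ≤ a}) {a x : A}
    (hx : x ≠ ⊥) (hxa : x ≤ a) : sInf {b ∈ B | b ≤ a} ≤ x := by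
  obtain ⟨b, hbB, hbx⟩ := exists_mem_le_of_ne_bot_of_eq_sSup hB hx
  exact (sInf_le (show b ∈ {b ∈ B | b ≤ a} from ⟨hbB, hbx.trans hxa⟩)).trans hbx

theorem sInf_le_self_of_eq_sSup (hB : ∀ a : A, a = sSup {b ∈ B | b ≤ a}) {a : A}
    (ha : a ≠ ⊥) : sInf {b ∈ B | b ≤ a} ≤ a :=
  sInf_le_of_ne_bot_of_eq_sSup hB ha le_rfl

theorem isAtom_sInf_of_eq_sSup (hB : ∀ a : A, a = sSup {b ∈ B | b ≤ a}) {a : A}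
    (ha : a ≠ ⊥) (hm : sInf {b ∈ B | b ≤ a} ≠ ⊥) : IsAtom (sInf {b ∈ B | b ≤ a}) := by
  refine ⟨hm, fun x hx => ?_⟩
  by_contra hx₀
  have hxa : x ≤ a := hx.le.trans (sInf_le_self_of_eq_sSup hB ha)
  exact hx.not_ge (sInf_le_of_ne_bot_of_eq_sSup hB hx₀ hxa)

end CompleteLattice

theorem atom_of_nonzero_inf_of_local_base_general
    {A : Type*} [Order.Frame A] (B : Set A)
    (hbase : ∀ a : A, a = sSup {b ∈ B | b ≤ a})
    (a : A) (ha : a ≠ ⊥)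
    (hm : sInf {b ∈ B | b ≤ a} ≠ ⊥) :
    sInf {b ∈ B | b ≤ a} ≤ a ∧ IsAtom (sInf {b ∈ B | b ≤ a}) :=
  ⟨sInf_le_self_of_eq_sSup hbase ha, isAtom_sInf_of_eq_sSup hbase ha hm⟩

/-- If the infimum `m` of the local base at `a ≠ ⊥` is nonzero, then
`m ≤ a` and `m` is an atom. -/
theorem atom_of_nonzero_inf_of_local_base
    {A : Type*} [Order.Frame A] (B : Set A)
    (hbase : ∀ a : A, a = sSup {b ∈ B | b ≤ a})
    (htri : ∀ b₁ ∈ B, ∀ b₂ ∈ B, b₁ ⊓ b₂ = ⊥ ∨ b₁ ≤ b₂ ∨ b₂ ≤ b₁)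
    (a : A) (ha : a ≠ ⊥)
    (hm : sInf {b ∈ B | b ≤ a} ≠ ⊥) :
    sInf {b ∈ B | b ≤ a} ≤ a ∧ IsAtom (sInf {b ∈ B | b ≤ a}) :=
  atom_of_nonzero_inf_of_local_base_general B hbase a ha hm
end

section
/- Let B be a non-archimedean base of a frame A, let a ∈ B, and let C be a nonempty chain contained in B with a ⊓ sSup C ≠ ⊥. Then either a ≤ c for some c ∈ C, or sSup C ≤ a. -/
def IsNonArchimedean {α : Type*} [Lattice α] [OrderBot α] (B : Set α) : Prop :=
  ∀ b₁ ∈ B, ∀ b₂ ∈ B, b₁ ⊓ b₂ = ⊥ ∨ b₁ ≤ b₂ ∨ b₂ ≤ b₁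

namespace IsNonArchimedean

variable {α : Type*} [Lattice α] [OrderBot α] {B : Set α}

theorem disjoint_of_not_le_of_not_le (hB : IsNonArchimedean B) {b₁ b₂ : α}
    (hb₁ : b₁ ∈ B) (hb₂ : b₂ ∈ B) (h₁₂ : ¬b₁ ≤ b₂) (h₂₁ : ¬b₂ ≤ b₁) : Disjoint b₁ b₂ :=
  disjoint_iff.2 <| (hB b₁ hb₁ b₂ hb₂).resolve_right (not_or.2 ⟨h₁₂, h₂₁⟩)

/-- An element of the chain not below `a` is disjoint from `a`; the elements under it inherit
this, and those above it are not below `a` either. -/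
theorem forall_disjoint_of_isChain (hB : IsNonArchimedean B) {a : α} (ha : a ∈ B)
    {C : Set α} (hCB : C ⊆ B) (hC : IsChain (· ≤ ·) C) (haC : ∀ c ∈ C, ¬a ≤ c)
    {c₀ : α} (hc₀ : c₀ ∈ C) (hc₀a : ¬c₀ ≤ a) : ∀ c ∈ C, Disjoint a c := by
  have hdisj₀ : Disjoint a c₀ :=
    hB.disjoint_of_not_le_of_not_le ha (hCB hc₀) (haC c₀ hc₀) hc₀a
  intro c hc
  rcases hC.total hc hc₀ with hcc₀ | hc₀c
  · exact hdisj₀.mono_right hcc₀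
  · exact hB.disjoint_of_not_le_of_not_le ha (hCB hc) (haC c hc) fun hca => hc₀a (hc₀c.trans hca)

end IsNonArchimedean

theorem le_chain_or_sSup_chain_le_general
    {A : Type*} [Order.Frame A] (B : Set A)
    (htri : ∀ b₁ ∈ B, ∀ b₂ ∈ B, b₁ ⊓ b₂ = ⊥ ∨ b₁ ≤ b₂ ∨ b₂ ≤ b₁)
    (a : A) (ha : a ∈ B)
    (C : Set A) (hCB : C ⊆ B) (hC : IsChain (· ≤ ·) C)
    (h : a ⊓ sSup C ≠ ⊥) :
    (∃ c ∈ C, a ≤ c) ∨ sSup C ≤ a := by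
  have hB : IsNonArchimedean B := htri
  refine or_iff_not_imp_left.2 fun haC => ?_
  push Not at haC
  by_contra hCa
  obtain ⟨c₀, hc₀, hc₀a⟩ : ∃ c ∈ C, ¬c ≤ a := by simpa only [sSup_le_iff, not_forall, exists_prop] using hCa
  have hdisj : Disjoint a (sSup C) :=
    disjoint_sSup_iff.2 (hB.forall_disjoint_of_isChain ha hCB hC haC hc₀ hc₀a)
  exact h hdisj.eq_bot

/-- For `a` in a non-archimedean base `B` and a nonempty chain `C ⊆ B`
with `a ⊓ sSup C ≠ ⊥`, either `a ≤ c` for some `c ∈ C`, or `sSup C ≤ a`. -/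
theorem le_chain_or_sSup_chain_le
    {A : Type*} [Order.Frame A] (B : Set A)
    (hbase : ∀ a : A, a = sSup {b ∈ B | b ≤ a})
    (htri : ∀ b₁ ∈ B, ∀ b₂ ∈ B, b₁ ⊓ b₂ = ⊥ ∨ b₁ ≤ b₂ ∨ b₂ ≤ b₁)
    (a : A) (ha : a ∈ B)
    (C : Set A) (hCB : C ⊆ B) (hCne : C.Nonempty) (hC : IsChain (· ≤ ·) C)
    (h : a ⊓ sSup C ≠ ⊥) :
    (∃ c ∈ C, a ≤ c) ∨ sSup C ≤ a :=
  le_chain_or_sSup_chain_le_general B htri a ha C hCB hC h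
end

section
/- Let B be a non-archimedean base of a frame A. Then the set B̄ = {sSup C | C is a nonempty chain contained in B} is again a non-archimedean base of A. -/
/-!
A chain supremum `sSup C` that is not below `sSup D` has a witness `c₀ ∈ C` with `c₀ ≰ sSup D`.
Since `C` is directed, every `c ∈ C` lies below some `c' ∈ C` above `c₀`, and then `c' ≰ sSup D`;
likewise every `d ∈ D` lies below some `d' ∈ D` with `d' ≰ sSup C`. Such `c'` and `d'` are
incomparable, so `c' ⊓ d' = ⊥`, hence `c ⊓ d = ⊥`, and frame distributivity gives
`sSup C ⊓ sSup D = ⊥`.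
-/

namespace Set

variable {A : Type*}

/-- The paper's notion of a base of a frame. -/
def IsJoinDense [CompleteLattice A] (B : Set A) : Prop :=
  ∀ a : A, a = sSup {b ∈ B | b ≤ a}

/-- The paper's non-archimedean condition. -/
def PairwiseDisjointOrComparable [Lattice A] [OrderBot A] (B : Set A) : Prop :=
  ∀ b₁ ∈ B, ∀ b₂ ∈ B, b₁ ⊓ b₂ = ⊥ ∨ b₁ ≤ b₂ ∨ b₂ ≤ b₁

def chainSups [CompleteLattice A] (B : Set A) : Set A :=
  {x : A | ∃ C : Set A, C ⊆ B ∧ C.Nonempty ∧ IsChain (· ≤ ·) C ∧ sSup C = x}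

theorem IsJoinDense.mono [CompleteLattice A] {B B' : Set A} (hB : B.IsJoinDense)
    (hBB' : B ⊆ B') : B'.IsJoinDense := fun a =>
  le_antisymm ((hB a).le.trans (sSup_le_sSup fun _ hb => ⟨hBB' hb.1, hb.2⟩))
    (sSup_le fun _ hb => hb.2)

theorem subset_chainSups [CompleteLattice A] (B : Set A) : B ⊆ B.chainSups := fun b hb =>
  ⟨{b}, singleton_subset_iff.2 hb, singleton_nonempty b, subsingleton_singleton.isChain,
    sSup_singleton⟩

theorem PairwiseDisjointOrComparable.sSup_inf_sSup_eq_bot [Order.Frame A] {B C D : Set A}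
    (hB : B.PairwiseDisjointOrComparable) (hCB : C ⊆ B) (hDB : D ⊆ B)
    (hC : IsChain (· ≤ ·) C) (hD : IsChain (· ≤ ·) D)
    (hCD : ¬ sSup C ≤ sSup D) (hDC : ¬ sSup D ≤ sSup C) : sSup C ⊓ sSup D = ⊥ := by
  obtain ⟨c₀, hc₀, hc₀D⟩ : ∃ c ∈ C, ¬ c ≤ sSup D := by simpa [sSup_le_iff] using hCD
  obtain ⟨d₀, hd₀, hd₀C⟩ : ∃ d ∈ D, ¬ d ≤ sSup C := by simpa [sSup_le_iff] using hDC
  refine (sSup_disjoint_iff.2 fun c hc => disjoint_sSup_iff.2 fun d hd => ?_).eq_bot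
  obtain ⟨c', hc', hcc', hc₀c'⟩ := hC.directedOn c hc c₀ hc₀
  obtain ⟨d', hd', hdd', hd₀d'⟩ := hD.directedOn d hd d₀ hd₀
  have hc'd' : ¬ c' ≤ d' := fun h => hc₀D (hc₀c'.trans (h.trans (le_sSup hd')))
  have hd'c' : ¬ d' ≤ c' := fun h => hd₀C (hd₀d'.trans (h.trans (le_sSup hc')))
  have hbot : c' ⊓ d' = ⊥ :=
    (hB c' (hCB hc') d' (hDB hd')).resolve_right (not_or.2 ⟨hc'd', hd'c'⟩)
  exact (disjoint_iff.2 hbot).mono hcc' hdd'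

theorem PairwiseDisjointOrComparable.chainSups [Order.Frame A] {B : Set A}
    (hB : B.PairwiseDisjointOrComparable) : B.chainSups.PairwiseDisjointOrComparable := by
  rintro _ ⟨C, hCB, -, hC, rfl⟩ _ ⟨D, hDB, -, hD, rfl⟩
  by_cases hCD : sSup C ≤ sSup D
  · exact Or.inr (Or.inl hCD)
  by_cases hDC : sSup D ≤ sSup C
  · exact Or.inr (Or.inr hDC)
  exact Or.inl (hB.sSup_inf_sSup_eq_bot hCB hDB hC hD hCD hDC)

end Set

/-- The set of suprema of nonempty chains contained in a
non-archimedean base is again a non-archimedean base. -/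
theorem sSup_chains_nonarchimedean_base
    {A : Type*} [Order.Frame A] (B : Set A)
    (hbase : ∀ a : A, a = sSup {b ∈ B | b ≤ a})
    (htri : ∀ b₁ ∈ B, ∀ b₂ ∈ B, b₁ ⊓ b₂ = ⊥ ∨ b₁ ≤ b₂ ∨ b₂ ≤ b₁) :
    (∀ a : A, a = sSup {b ∈ {x : A | ∃ C : Set A, C ⊆ B ∧ C.Nonempty ∧
        IsChain (· ≤ ·) C ∧ sSup C = x} | b ≤ a}) ∧
    (∀ b₁ ∈ {x : A | ∃ C : Set A, C ⊆ B ∧ C.Nonempty ∧ IsChain (· ≤ ·) C ∧ sSup C = x},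
     ∀ b₂ ∈ {x : A | ∃ C : Set A, C ⊆ B ∧ C.Nonempty ∧ IsChain (· ≤ ·) C ∧ sSup C = x},
        b₁ ⊓ b₂ = ⊥ ∨ b₁ ≤ b₂ ∨ b₂ ≤ b₁) :=
  ⟨Set.IsJoinDense.mono hbase (Set.subset_chainSups B),
    Set.PairwiseDisjointOrComparable.chainSups htri⟩
end

section
/- (Canonical form) Let B be a non-archimedean base of a frame A that is closed under suprema of nonempty chains (sSup C ∈ B for every nonempty chain C ⊆ B). Then every a ∈ A is the supremum of a pairwise disjoint subset of B: there exists S ⊆ B with sSup S = a and x ⊓ y = ⊥ for all x, y ∈ S with x ≠ y. -/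
/-! By Zorn's lemma, closure under suprema of nonempty chains makes every basic element below `a`
lie under a maximal one, so the maximal basic elements below `a` still have supremum `a`. Two
distinct maximal elements cannot be comparable, so the non-archimedean trichotomy forces them to
be disjoint. -/

theorem exists_le_maximal_of_sSup_chain_mem {α : Type*} [CompleteLattice α] {T : Set α}
    (hT : ∀ C ⊆ T, C.Nonempty → IsChain (· ≤ ·) C → sSup C ∈ T) {x : α} (hx : x ∈ T) :
    ∃ m, x ≤ m ∧ Maximal (· ∈ T) m :=
  zorn_le_nonempty₀ T (fun C hCT hC y hy ↦ ⟨sSup C, hT C hCT ⟨y, hy⟩ hC, fun _ ↦ le_sSup⟩) x hx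

theorem sSup_chain_mem_setOf_mem_le {α : Type*} [CompleteLattice α] {B : Set α}
    (hB : ∀ C ⊆ B, C.Nonempty → IsChain (· ≤ ·) C → sSup C ∈ B) (a : α) :
    ∀ C ⊆ {b ∈ B | b ≤ a}, C.Nonempty → IsChain (· ≤ ·) C → sSup C ∈ {b ∈ B | b ≤ a} :=
  fun C hC hne hchain ↦
    ⟨hB C (fun _ hc ↦ (hC hc).1) hne hchain, sSup_le fun _ hc ↦ (hC hc).2⟩

theorem sSup_setOf_maximal_eq {α : Type*} [CompleteLattice α] {T : Set α}
    (h : ∀ x ∈ T, ∃ m, x ≤ m ∧ Maximal (· ∈ T) m) :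
    sSup {m | Maximal (· ∈ T) m} = sSup T :=
  le_antisymm (sSup_le_sSup fun _ hm ↦ hm.1) <| sSup_le fun x hx ↦
    let ⟨_, hxm, hm⟩ := h x hx
    hxm.trans (le_sSup hm)

theorem pairwise_inf_eq_bot_setOf_maximal {α : Type*} [Lattice α] [OrderBot α] {T : Set α}
    (h : ∀ x ∈ T, ∀ y ∈ T, x ⊓ y = ⊥ ∨ x ≤ y ∨ y ≤ x) :
    {m | Maximal (· ∈ T) m}.Pairwise (· ⊓ · = ⊥) := by
  intro x hx y hy hxy
  rcases h x hx.1 y hy.1 with hbot | hle | hge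
  · exact hbot
  · exact absurd (hx.eq_of_le hy.1 hle) hxy
  · exact absurd (hy.eq_of_le hx.1 hge).symm hxy

/-- Canonical form: if a non-archimedean base is closed under suprema
of nonempty chains, then every element is the supremum of a pairwise disjoint
subset of the base. -/
theorem canonical_form_disjoint_decomposition
    {A : Type*} [Order.Frame A] (B : Set A)
    (hbase : ∀ a : A, a = sSup {b ∈ B | b ≤ a})
    (htri : ∀ b₁ ∈ B, ∀ b₂ ∈ B, b₁ ⊓ b₂ = ⊥ ∨ b₁ ≤ b₂ ∨ b₂ ≤ b₁)
    (hclosed : ∀ C : Set A, C ⊆ B → C.Nonempty → IsChain (· ≤ ·) C → sSup C ∈ B) :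
    ∀ a : A, ∃ S : Set A, S ⊆ B ∧ sSup S = a ∧
      ∀ x ∈ S, ∀ y ∈ S, x ≠ y → x ⊓ y = ⊥ := by
  intro a
  set T : Set A := {b ∈ B | b ≤ a}
  have hmax : ∀ x ∈ T, ∃ m, x ≤ m ∧ Maximal (· ∈ T) m := fun x hx ↦
    exists_le_maximal_of_sSup_chain_mem (sSup_chain_mem_setOf_mem_le hclosed a) hx
  refine ⟨{m | Maximal (· ∈ T) m}, fun m hm ↦ hm.1.1, ?_, ?_⟩
  · rw [sSup_setOf_maximal_eq hmax, ← hbase a]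
  · exact pairwise_inf_eq_bot_setOf_maximal fun x hx y hy ↦ htri x hx.1 y hy.1
end

section
/- Let P be a partial order in which for every a ∈ P the set {x ∈ P | x ≤ a} is a chain. Then the family of sets U_t (t ∈ P) satisfies the trichotomy law: for all s, t ∈ P, either U_s ∩ U_t = ∅, or U_s ⊆ U_t, or U_t ⊆ U_s. -/
/-!
A branch through `b` contains everything below `b`: each element of the branch is either below
`b`, hence comparable with any `a ≤ b` because `Set.Iic b` is a chain, or above `b`, hence above
`a`; so adding `a` keeps a chain and maximality forces `a` to be there already. Consequently, if
`s` and `t` share a branch they are comparable, say `s ≤ t`, and then every branch through `t`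
passes through `s`.
-/

theorem IsMaxChain.mem_of_le {α : Type*} [Preorder α] {c : Set α} {a b : α}
    (hc : IsMaxChain (· ≤ ·) c) (hb : IsChain (· ≤ ·) (Set.Iic b)) (hbc : b ∈ c) (hab : a ≤ b) :
    a ∈ c := by
  have hcomp : ∀ x ∈ c, a ≠ x → a ≤ x ∨ x ≤ a := by
    intro x hx _
    rcases hc.isChain.total hx hbc with hxb | hbx
    · exact hb.total (hab : a ∈ Set.Iic b) (hxb : x ∈ Set.Iic b)
    · exact Or.inl (hab.trans hbx)
  exact (hc.2 (hc.isChain.insert hcomp) (Set.subset_insert a c)).symm ▸ Set.mem_insert a c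

/-- In a partial order whose principal downsets are chains, the sets
`U_t` of branches through `t` satisfy the trichotomy law. -/
theorem branch_sets_trichotomy
    {P : Type*} [PartialOrder P]
    (hP : ∀ a : P, IsChain (· ≤ ·) {x : P | x ≤ a}) :
    ∀ s t : P,
      {ξ : Set P | IsMaxChain (· ≤ ·) ξ ∧ s ∈ ξ} ∩
          {ξ : Set P | IsMaxChain (· ≤ ·) ξ ∧ t ∈ ξ} = ∅ ∨
      {ξ : Set P | IsMaxChain (· ≤ ·) ξ ∧ s ∈ ξ} ⊆
          {ξ : Set P | IsMaxChain (· ≤ ·) ξ ∧ t ∈ ξ} ∨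
      {ξ : Set P | IsMaxChain (· ≤ ·) ξ ∧ t ∈ ξ} ⊆
          {ξ : Set P | IsMaxChain (· ≤ ·) ξ ∧ s ∈ ξ} := by
  intro s t
  refine or_iff_not_imp_left.2 fun hne ↦ ?_
  obtain ⟨ξ, ⟨hξ, hsξ⟩, -, htξ⟩ := Set.nonempty_iff_ne_empty.2 hne
  rcases hξ.isChain.total hsξ htξ with hst | hts
  · exact Or.inr fun η ⟨hη, htη⟩ ↦ ⟨hη, hη.mem_of_le (hP t) htη hst⟩
  · exact Or.inl fun η ⟨hη, hsη⟩ ↦ ⟨hη, hη.mem_of_le (hP s) hsη hts⟩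
end

section
/- Let P be a nonempty partial order, and for an upper set U of P define k*(U) = {ξ | ξ is a maximal chain of P and ξ ∩ U ≠ ∅}. Then k*(P) is the set of all maximal chains, k*(∅) = ∅, k* preserves arbitrary unions (k*(⋃ᵢ Uᵢ) = ⋃ᵢ k*(Uᵢ) for any family of upper sets Uᵢ), and k* preserves binary intersections (k*(U ∩ V) = k*(U) ∩ k*(V) for upper sets U, V). Consequently, {k*(U) | U an upper set of P} is a topology on the set of maximal chains of P. -/
/-!
A maximal chain meeting both upper sets `U` and `V` meets `U ∩ V`: of the two witnesses,
which are comparable, the larger one lies in both upper sets. Unions are preserved for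
any family of sets, and every maximal chain of a nonempty poset is nonempty. Hence `k*`
is a frame map from the upper sets of `P` to the subsets of maximal chains, and its image
is a topology.
-/

open Set

section MaxChainsMeeting

variable {P : Type*}

/-- The paper's `k*(U)`. -/
def maxChainsMeeting [LE P] (U : Set P) : Set {ξ : Set P // IsMaxChain (· ≤ ·) ξ} :=
  {ξ | (ξ.1 ∩ U).Nonempty}

section LE

variable [LE P]

@[simp]
theorem maxChainsMeeting_empty : maxChainsMeeting (∅ : Set P) = ∅ := by
  ext ξ
  simp [maxChainsMeeting]

@[simp]
theorem maxChainsMeeting_univ [Nonempty P] : maxChainsMeeting (univ : Set P) = univ :=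
  eq_univ_of_forall fun ξ => by
    simpa [maxChainsMeeting] using ξ.2.nonempty_iff.mp ‹_›

theorem maxChainsMeeting_iUnion {ι : Sort*} (U : ι → Set P) :
    maxChainsMeeting (⋃ i, U i) = ⋃ i, maxChainsMeeting (U i) := by
  ext ξ
  simp only [maxChainsMeeting, mem_ofPred_eq, mem_iUnion, inter_iUnion, nonempty_iUnion]

end LE

section Preorder

variable [Preorder P]

theorem IsChain.inter_inter_nonempty {ξ U V : Set P} (hξ : IsChain (· ≤ ·) ξ)
    (hU : IsUpperSet U) (hV : IsUpperSet V) (hξU : (ξ ∩ U).Nonempty)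
    (hξV : (ξ ∩ V).Nonempty) : (ξ ∩ (U ∩ V)).Nonempty := by
  obtain ⟨a, haξ, haU⟩ := hξU
  obtain ⟨b, hbξ, hbV⟩ := hξV
  rcases hξ.total haξ hbξ with hab | hba
  · exact ⟨b, hbξ, hU hab haU, hbV⟩
  · exact ⟨a, haξ, haU, hV hba hbV⟩

theorem maxChainsMeeting_inter {U V : Set P} (hU : IsUpperSet U) (hV : IsUpperSet V) :
    maxChainsMeeting (U ∩ V) = maxChainsMeeting U ∩ maxChainsMeeting V := by
  ext ξ
  refine ⟨fun h => ⟨h.mono ?_, h.mono ?_⟩, fun h => ξ.2.isChain.inter_inter_nonempty hU hV h.1 h.2⟩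
  · exact inter_subset_inter_right _ inter_subset_left
  · exact inter_subset_inter_right _ inter_subset_right

variable (P) [Nonempty P]

abbrev maxChainTopology : TopologicalSpace {ξ : Set P // IsMaxChain (· ≤ ·) ξ} where
  IsOpen V := ∃ U : Set P, IsUpperSet U ∧ maxChainsMeeting U = V
  isOpen_univ := ⟨univ, isUpperSet_univ, maxChainsMeeting_univ⟩
  isOpen_inter := by
    rintro _ _ ⟨U, hU, rfl⟩ ⟨V, hV, rfl⟩
    exact ⟨U ∩ V, hU.inter hV, maxChainsMeeting_inter hU hV⟩
  isOpen_sUnion S hS := by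
    choose U hU hUS using hS
    refine ⟨⋃ s : S, U s s.2, isUpperSet_iUnion fun s => hU s s.2, ?_⟩
    rw [maxChainsMeeting_iUnion, sUnion_eq_iUnion]
    exact iUnion_congr fun s => hUS s s.2

end Preorder

end MaxChainsMeeting

/-- For a nonempty partial order `P`, the map
`k*(U) = {maximal chains meeting U}` sends the whole poset to all maximal chains,
`∅` to `∅`, preserves arbitrary unions of upper sets and binary intersections of
upper sets; consequently its image is a topology on the set of maximal chains. -/
theorem kstar_topology
    {P : Type*} [PartialOrder P] [Nonempty P]
    (kstar : Set P → Set {ξ : Set P // IsMaxChain (· ≤ ·) ξ})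
    (hk : ∀ (U : Set P) (ξ : {ξ : Set P // IsMaxChain (· ≤ ·) ξ}),
      ξ ∈ kstar U ↔ (ξ.1 ∩ U).Nonempty) :
    kstar Set.univ = Set.univ ∧
    kstar ∅ = ∅ ∧
    (∀ (ι : Type*) (Us : ι → Set P), (∀ i, IsUpperSet (Us i)) →
      kstar (⋃ i, Us i) = ⋃ i, kstar (Us i)) ∧
    (∀ U V : Set P, IsUpperSet U → IsUpperSet V →
      kstar (U ∩ V) = kstar U ∩ kstar V) ∧
    (∃ T : TopologicalSpace {ξ : Set P // IsMaxChain (· ≤ ·) ξ},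
      ∀ V : Set {ξ : Set P // IsMaxChain (· ≤ ·) ξ},
        T.IsOpen V ↔ ∃ U : Set P, IsUpperSet U ∧ kstar U = V) := by
  obtain rfl : kstar = maxChainsMeeting := funext fun U => Set.ext (hk U)
  exact ⟨maxChainsMeeting_univ, maxChainsMeeting_empty,
    fun _ Us _ => maxChainsMeeting_iUnion Us,
    fun _ _ hU hV => maxChainsMeeting_inter hU hV,
    maxChainTopology P, fun _ => Iff.rfl⟩
end

section
/- Let P be a nonempty partial order in which for every a ∈ P the set {x ∈ P | x ≤ a} is a chain, and for an upper set U of P let k*(U) = {ξ branch of P | ξ ∩ U ≠ ∅}. Then a set V of branches of P belongs to {k*(U) | U an upper set of P} if and only if V is open in the topology on the set of branches generated by {U_t | t ∈ P}; i.e. the topology {k*(U) | U upper set} coincides with the topology generated by the sets U_t. -/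
/-! Every `k*(U)` is the union of the sets `U_t` for `t ∈ U`, so it is open. Conversely, when
principal downsets are chains, branches are downward closed, hence `U_t = k*(Ici t)`; and since a
branch is a chain, `k*` turns intersections of upper sets into intersections, so the sets
`k*(U)` contain the generators and are closed under the topology operations. -/

open Set

abbrev Branch (P : Type*) [PartialOrder P] := {ξ : Set P // IsMaxChain (· ≤ ·) ξ}

section

variable {P : Type*} [PartialOrder P]

lemma IsMaxChain.mem_of_le_s14 (hP : ∀ a : P, IsChain (· ≤ ·) {x : P | x ≤ a}) {ξ : Set P}
    (hξ : IsMaxChain (· ≤ ·) ξ) {t x : P} (hx : x ∈ ξ) (htx : t ≤ x) : t ∈ ξ := by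
  have hchain : IsChain (· ≤ ·) (insert t ξ) := by
    refine hξ.1.insert fun y hy hne => ?_
    rcases eq_or_ne y x with rfl | hyx
    · exact Or.inl htx
    · rcases hξ.1 hy hx hyx with hyx' | hxy
      · exact hP x htx hyx' hne
      · exact Or.inl (htx.trans hxy)
  rw [hξ.2 hchain (subset_insert t ξ)]
  exact mem_insert t ξ

lemma IsMaxChain.nonempty [Nonempty P] {ξ : Set P} (hξ : IsMaxChain (· ≤ ·) ξ) :
    ξ.Nonempty := by
  obtain ⟨a⟩ := ‹Nonempty P›
  rw [nonempty_iff_ne_empty]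
  rintro rfl
  exact singleton_ne_empty a (hξ.2 (subsingleton_singleton.isChain) (empty_subset _)).symm

/-- `k*(U)`, the branches meeting `U`. -/
def kstar (U : Set P) : Set (Branch P) := {ξ | (ξ.1 ∩ U).Nonempty}

lemma kstar_eq_biUnion (U : Set P) : kstar U = ⋃ t ∈ U, {ξ : Branch P | t ∈ ξ.1} := by
  ext ξ
  simp [kstar, Set.Nonempty, and_comm]

lemma kstar_Ici (hP : ∀ a : P, IsChain (· ≤ ·) {x : P | x ≤ a}) (t : P) :
    kstar (Ici t) = {ξ : Branch P | t ∈ ξ.1} := by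
  ext ξ
  refine ⟨fun ⟨x, hxξ, htx⟩ => ξ.2.mem_of_le_s14 hP hxξ htx, fun ht => ⟨t, ht, le_rfl⟩⟩

lemma kstar_univ [Nonempty P] : kstar (univ : Set P) = univ := by
  ext ξ
  simpa [kstar] using ξ.2.nonempty

lemma kstar_inter {U U' : Set P} (hU : IsUpperSet U) (hU' : IsUpperSet U') :
    kstar (U ∩ U') = kstar U ∩ kstar U' := by
  ext ξ
  refine ⟨fun ⟨x, hxξ, hxU, hxU'⟩ => ⟨⟨x, hxξ, hxU⟩, ⟨x, hxξ, hxU'⟩⟩, ?_⟩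
  rintro ⟨⟨u, huξ, huU⟩, ⟨u', hu'ξ, hu'U'⟩⟩
  -- the larger of `u` and `u'` lies in both upper sets
  rcases ξ.2.1.total huξ hu'ξ with huu' | hu'u
  · exact ⟨u', hu'ξ, hU huu' huU, hu'U'⟩
  · exact ⟨u, huξ, huU, hU' hu'u hu'U'⟩

lemma kstar_iUnion {ι : Sort*} (U : ι → Set P) : kstar (⋃ i, U i) = ⋃ i, kstar (U i) := by
  ext ξ
  simp only [kstar, inter_iUnion, nonempty_iUnion, mem_ofPred_eq, mem_iUnion]

end

/-- For a nonempty partial order whose principal downsets are chains,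
a set of branches is of the form `k*(U)` for an upper set `U` iff it is open in the
topology generated by the sets `U_t`. -/
theorem kstar_topology_eq_generated_topology
    {P : Type*} [PartialOrder P] [Nonempty P]
    (hP : ∀ a : P, IsChain (· ≤ ·) {x : P | x ≤ a}) :
    ∀ V : Set {ξ : Set P // IsMaxChain (· ≤ ·) ξ},
      (∃ U : Set P, IsUpperSet U ∧
          V = {ξ : {ξ : Set P // IsMaxChain (· ≤ ·) ξ} | (ξ.1 ∩ U).Nonempty}) ↔
      (TopologicalSpace.generateFrom
        {W : Set {ξ : Set P // IsMaxChain (· ≤ ·) ξ} |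
          ∃ t : P, W = {ξ : {ξ : Set P // IsMaxChain (· ≤ ·) ξ} | t ∈ ξ.1}}).IsOpen V := by
  let _ : TopologicalSpace (Branch P) :=
    .generateFrom {W | ∃ t : P, W = {ξ : Branch P | t ∈ ξ.1}}
  intro V
  change (∃ U, IsUpperSet U ∧ V = kstar U) ↔ IsOpen V
  constructor
  · rintro ⟨U, -, rfl⟩
    rw [kstar_eq_biUnion]
    exact isOpen_biUnion fun t _ => .basic _ ⟨t, rfl⟩
  · intro hV
    induction hV with
    | basic W hW =>
      obtain ⟨t, rfl⟩ := hW
      exact ⟨Ici t, isUpperSet_Ici t, (kstar_Ici hP t).symm⟩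
    | univ => exact ⟨univ, isUpperSet_univ, kstar_univ.symm⟩
    | inter A B _ _ ihA ihB =>
      obtain ⟨U, hU, rfl⟩ := ihA
      obtain ⟨U', hU', rfl⟩ := ihB
      exact ⟨U ∩ U', hU.inter hU', (kstar_inter hU hU').symm⟩
    | sUnion S _ ihS =>
      choose! U hU hSU using ihS
      refine ⟨⋃ s ∈ S, U s, isUpperSet_iUnion₂ hU, ?_⟩
      rw [sUnion_eq_biUnion, kstar_iUnion]
      simp only [kstar_iUnion]
      exact iUnion₂_congr hSU
end

section
/- Let P be a partial order in which for every a ∈ P the set {x ∈ P | x ≤ a} is a chain. For an upper set U of P define ker(U) = {a ∈ P | every branch of P containing a meets U}. Then ker(U) is again an upper set, and ker is a nucleus on the frame of upper sets of P: U ⊆ ker(U) for every upper set U, ker(U ∩ V) = ker(U) ∩ ker(V) for all upper sets U, V, and ker(ker(U)) = ker(U). -/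
/-!
Because every principal downset is a chain, a branch is closed downwards: adding an element
below one of its points keeps it a chain. Hence `ker U` is an upper set. A branch through `a`
meeting both `U` and `V` meets `U ∩ V` at the larger of the two witnesses, as both sets are
upper. Finally, a branch through a point of `ker U` already meets `U`, which gives idempotence.
-/

section

open Set

variable {P : Type*} [Preorder P]

theorem IsMaxChain.isLowerSet (hP : ∀ a : P, IsChain (· ≤ ·) {x : P | x ≤ a})
    {ξ : Set P} (hξ : IsMaxChain (· ≤ ·) ξ) : IsLowerSet ξ := by
  intro b a hab hb
  have hchain : IsChain (· ≤ ·) (insert a ξ) := by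
    refine hξ.1.insert fun y hy _ => ?_
    rcases hξ.1.total hy hb with hyb | hby
    · exact (hP b).total hab hyb
    · exact Or.inl (hab.trans hby)
  exact hξ.2 hchain (subset_insert a ξ) ▸ mem_insert a ξ

def branchKernel (U : Set P) : Set P :=
  {a | ∀ ξ : Set P, IsMaxChain (· ≤ ·) ξ → a ∈ ξ → (ξ ∩ U).Nonempty}

theorem subset_branchKernel (U : Set P) : U ⊆ branchKernel U :=
  fun a ha _ _ haξ => ⟨a, haξ, ha⟩

theorem branchKernel_mono {U V : Set P} (h : U ⊆ V) : branchKernel U ⊆ branchKernel V :=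
  fun _ ha ξ hξ haξ => (ha ξ hξ haξ).mono (inter_subset_inter_right ξ h)

theorem isUpperSet_branchKernel (hP : ∀ a : P, IsChain (· ≤ ·) {x : P | x ≤ a}) (U : Set P) :
    IsUpperSet (branchKernel U) :=
  fun _ _ hab ha ξ hξ hbξ => ha ξ hξ (hξ.isLowerSet hP hab hbξ)

theorem branchKernel_inter {U V : Set P} (hU : IsUpperSet U) (hV : IsUpperSet V) :
    branchKernel (U ∩ V) = branchKernel U ∩ branchKernel V := by
  refine (subset_inter (branchKernel_mono inter_subset_left)
    (branchKernel_mono inter_subset_right)).antisymm ?_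
  rintro a ⟨haU, haV⟩ ξ hξ haξ
  obtain ⟨u, huξ, huU⟩ := haU ξ hξ haξ
  obtain ⟨v, hvξ, hvV⟩ := haV ξ hξ haξ
  rcases hξ.1.total huξ hvξ with huv | hvu
  · exact ⟨v, hvξ, hU huv huU, hvV⟩
  · exact ⟨u, huξ, huU, hV hvu hvV⟩

theorem branchKernel_branchKernel (U : Set P) : branchKernel (branchKernel U) = branchKernel U := by
  refine subset_antisymm (fun _ ha ξ hξ haξ => ?_) (subset_branchKernel _)
  obtain ⟨b, hbξ, hb⟩ := ha ξ hξ haξ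
  exact hb ξ hξ hbξ

end

/-- For a partial order whose principal downsets are chains, the map
`ker(U) = {a | every branch through a meets U}` sends upper sets to upper sets and
is a nucleus on the frame of upper sets: inflationary, preserves binary
intersections, and idempotent. -/
theorem ker_is_nucleus
    {P : Type*} [PartialOrder P]
    (hP : ∀ a : P, IsChain (· ≤ ·) {x : P | x ≤ a})
    (ker : Set P → Set P)
    (hker : ∀ U : Set P, ker U =
      {a : P | ∀ ξ : Set P, IsMaxChain (· ≤ ·) ξ → a ∈ ξ → (ξ ∩ U).Nonempty}) :
    (∀ U : Set P, IsUpperSet U → IsUpperSet (ker U)) ∧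
    (∀ U : Set P, IsUpperSet U → U ⊆ ker U) ∧
    (∀ U V : Set P, IsUpperSet U → IsUpperSet V → ker (U ∩ V) = ker U ∩ ker V) ∧
    (∀ U : Set P, IsUpperSet U → ker (ker U) = ker U) := by
  obtain rfl : ker = branchKernel := funext hker
  exact ⟨fun U _ => isUpperSet_branchKernel hP U, fun U _ => subset_branchKernel U,
    fun _ _ hU hV => branchKernel_inter hU hV, fun U _ => branchKernel_branchKernel U⟩
end
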